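/- For every propositional base K and every formula φ, if K ⊩₁ φ then K ⊩_{a1} φ. -/

import Mathlib

namespace Occ

/-- Propositional formulas over variables indexed by `ℕ`,
built from variables using negation and conjunction. -/
inductive Form : Type where
  | var : ℕ → Form
  | neg : Form → Form
  | conj : Form → Form → Form
deriving DecidableEq

/-- Boolean evaluation of a formula under an interpretation `w`. -/
def eval (w : ℕ → Bool) : Form → Bool
  | .var p => w p
  | .neg φ => !(eval w φ)
  | .conj φ ψ => eval w φ && eval w ψ

/-- The variables occurring in a formula. -/
def vars : Form → Finset ℕ
  | .var p => {p}
  | .neg φ => vars φ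
  | .conj φ ψ => vars φ ∪ vars ψ

/-- A step in a path addressing a subformula occurrence. -/
inductive Step : Type where
  | neg | left | right
deriving DecidableEq

/-- `occAt φ l pol = some (p, pol')` iff the path `l` addresses an occurrence of the
variable `p` in `φ`, and this occurrence has polarity `pol'` (`true` = positive)
when the ambient polarity of `φ` is `pol`. -/
def occAt : Form → List Step → Bool → Option (ℕ × Bool)
  | .var p, [], pol => some (p, pol)
  | .neg φ, .neg :: l, pol => occAt φ l (!pol)
  | .conj φ _, .left :: l, pol => occAt φ l pol
  | .conj _ ψ, .right :: l, pol => occAt ψ l pol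
  | _, _, _ => none

/-- A variable occurrence in a base: a formula together with a path into it. -/
abbrev Occurrence : Type := Form × List Step

/-- A propositional base: a finite set of formulas. -/
abbrev PB : Type := Finset Form

/-- `o` is a variable occurrence in the base `K`. -/
def IsOcc (K : PB) (o : Occurrence) : Prop :=
  o.1 ∈ K ∧ ∃ p pol, occAt o.1 o.2 true = some (p, pol)

/-- `o` is an occurrence of the variable `p` in `K`, of polarity `pol`. -/
def IsOccOf (K : PB) (o : Occurrence) (p : ℕ) (pol : Bool) : Prop :=
  o.1 ∈ K ∧ occAt o.1 o.2 true = some (p, pol)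

/-- `o` is an occurrence of the variable `p` in `K`. -/
def IsOccVar (K : PB) (o : Occurrence) (p : ℕ) : Prop :=
  ∃ pol, IsOccOf K o p pol

/-- `o` is a positive variable occurrence in `K`. -/
def IsPosOcc (K : PB) (o : Occurrence) : Prop := ∃ p, IsOccOf K o p true

/-- `o` is a negative variable occurrence in `K`. -/
def IsNegOcc (K : PB) (o : Occurrence) : Prop := ∃ p, IsOccOf K o p false

/-- `o` and `o'` are occurrences of the same variable. -/
def sameVar (o o' : Occurrence) : Prop :=
  ∃ p pol pol', occAt o.1 o.2 true = some (p, pol) ∧ occAt o'.1 o'.2 true = some (p, pol')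

/-- The variables occurring in a base. -/
def varsPB (K : PB) : Finset ℕ := K.sup vars

/-- `w` is a (Boolean) model of the base `K` (i.e. of the conjunction of its formulas). -/
def modelsPB (w : ℕ → Bool) (K : PB) : Prop := ∀ φ ∈ K, eval w φ = true

/-- A base is consistent iff the conjunction of its formulas has a model. -/
def ConsistentPB (K : PB) : Prop := ∃ w, modelsPB w K

/-- Classical entailment from a base. -/
def Entails (K : PB) (φ : Form) : Prop := ∀ w, modelsPB w K → eval w φ = true

/-- Rename every variable occurrence of a formula, the new variable of the
occurrence at path `l` being `f l`. -/
def renameBy : (List Step → ℕ) → Form → Form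
  | f, .var _ => .var (f [])
  | f, .neg φ => .neg (renameBy (fun l => f (.neg :: l)) φ)
  | f, .conj φ ψ =>
      .conj (renameBy (fun l => f (.left :: l)) φ) (renameBy (fun l => f (.right :: l)) ψ)

/-- The formula `φ` (viewed as a member of a base) with each occurrence `o`
replaced by the variable `R o`. -/
def renameForm (R : Occurrence → ℕ) (φ : Form) : Form :=
  renameBy (fun l => R (φ, l)) φ

/-- A C-renaming of `K`: it assigns a pairwise distinct fresh variable to each
occurrence of `K`. -/
structure IsCRenaming (K : PB) (R : Occurrence → ℕ) : Prop where
  fresh : ∀ o, IsOcc K o → R o ∉ varsPB K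
  inj : ∀ o o', IsOcc K o → IsOcc K o' → R o = R o' → o = o'

/-- Binary relations on occurrences, viewed as sets of ordered pairs. -/
abbrev Rel : Type := Set (Occurrence × Occurrence)

/-- `r` is an equivalence relation on `Occ(K)`. -/
structure IsEquivOn (K : PB) (r : Rel) : Prop where
  dom : ∀ q ∈ r, IsOcc K q.1 ∧ IsOcc K q.2
  refl : ∀ o, IsOcc K o → (o, o) ∈ r
  symm : ∀ q ∈ r, (q.2, q.1) ∈ r
  trans : ∀ a b c : Occurrence, (a, b) ∈ r → (b, c) ∈ r → (a, c) ∈ r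

/-- Compliance: related occurrences are occurrences of the same variable. -/
def Compliant (r : Rel) : Prop := ∀ q ∈ r, sameVar q.1 q.2

/-- Consistency of the formula `⋀R(K) ∧ ⋀_{(o,o')∈r} (R(o) ↔ R(o'))`. -/
def RelConsistent (K : PB) (R : Occurrence → ℕ) (r : Rel) : Prop :=
  ∃ w : ℕ → Bool, (∀ φ ∈ K, eval w (renameForm R φ) = true) ∧
    ∀ q ∈ r, w (R q.1) = w (R q.2)

/-- Minimal Inconsistency Relation of `K` (w.r.t. the C-renaming `R`). -/
def IsMIR (K : PB) (R : Occurrence → ℕ) (r : Rel) : Prop :=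
  IsEquivOn K r ∧ Compliant r ∧ ¬ RelConsistent K R r ∧
    ∀ r', IsEquivOn K r' → Compliant r' → ¬ RelConsistent K R r' → ¬ r' ⊂ r

/-- Maximal Consistency Relation of `K` (w.r.t. the C-renaming `R`). -/
def IsMCR (K : PB) (R : Occurrence → ℕ) (r : Rel) : Prop :=
  IsEquivOn K r ∧ Compliant r ∧ RelConsistent K R r ∧
    ∀ r', IsEquivOn K r' → Compliant r' → RelConsistent K R r' → ¬ r ⊂ r'

/-- The relation `∼_c^K`: relating occurrences of `K` of the same variable. -/
def sameVarRel (K : PB) : Rel :=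
  {q | IsOcc K q.1 ∧ IsOcc K q.2 ∧ sameVar q.1 q.2}

/-- `PN(r)`: related pairs consisting of a positive and a negative occurrence. -/
def PN (K : PB) (r : Rel) : Rel :=
  {q | q ∈ r ∧ IsPosOcc K q.1 ∧ IsNegOcc K q.2}

/-- A BMCR: an MCR satisfying Maximality-2. -/
def IsBMCR (K : PB) (R : Occurrence → ℕ) (r : Rel) : Prop :=
  IsMCR K R r ∧
    ∀ r', IsEquivOn K r' → Compliant r' → RelConsistent K R r' → ¬ PN K r ⊂ PN K r'

/-- `H` is a hitting set of the collection `S`. -/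
def IsHittingSet {α : Type} (S : Set (Set α)) (H : Set α) : Prop :=
  ∀ s ∈ S, (s ∩ H).Nonempty

/-- `H` is a minimal hitting set of the collection `S`. -/
def IsMinHittingSet {α : Type} (S : Set (Set α)) (H : Set α) : Prop :=
  IsHittingSet S H ∧ ∀ H', H' ⊂ H → ¬ IsHittingSet S H'

/-- `r` is `H`-maximal (for an equivalence relation `r ⊆ ∼_c^K`). -/
def IsHMaximal (K : PB) (H r : Rel) : Prop :=
  r ∩ H = ∅ ∧
    ∀ r', IsEquivOn K r' → r' ⊆ sameVarRel K → r ⊂ r' → (r' ∩ H).Nonempty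

/-- `r` is `H`-minimal (for an equivalence relation `r ⊆ ∼_c^K`). -/
def IsHMinimal (K : PB) (H r : Rel) : Prop :=
  H ⊆ r ∧ ∀ r', IsEquivOn K r' → r' ⊂ r → ¬ H ⊆ r'

/-- The set of all MIRs of `K`. -/
def MIRs (K : PB) (R : Occurrence → ℕ) : Set Rel := {r | IsMIR K R r}

/-- The set of all C-MCRs of `K`: relations `θ ⊆ ∼_c^K` with `∼_c^K ∖ θ` an MCR. -/
def CMCRs (K : PB) (R : Occurrence → ℕ) : Set Rel :=
  {θ | θ ⊆ sameVarRel K ∧ IsMCR K R (sameVarRel K \ θ)}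

/-- `ρ` is a `∼`-renaming for the equivalence relation `r` on `Occ(K)`:
it assigns a distinct variable to each equivalence class (so it is constant on
classes and distinguishes distinct classes), and any class containing all the
occurrences of a variable `p` is mapped to `p` itself. -/
def IsClassRenaming (K : PB) (r : Rel) (ρ : Occurrence → ℕ) : Prop :=
  (∀ o o', IsOcc K o → IsOcc K o' → (ρ o = ρ o' ↔ (o, o') ∈ r)) ∧
    (∀ o p, IsOccVar K o p → (∀ o', IsOccVar K o' p → (o, o') ∈ r) → ρ o = p)

/-- `σ` encodes a tuple `(q₁,…,q_m) ∈ P(ρ_∼, S)` where `S = (p₁,…,p_m)`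
enumerates `var(K) ∩ var(φ)`: it maps each shared variable `p` to a member of
`⌈ρ⌉(p)` and is the identity elsewhere. -/
def IsTupleChoice (K : PB) (φ : Form) (ρ : Occurrence → ℕ) (σ : ℕ → ℕ) : Prop :=
  (∀ p, p ∈ varsPB K → p ∈ vars φ → ∃ o, IsOccVar K o p ∧ σ p = ρ o) ∧
    (∀ p, ¬ (p ∈ varsPB K ∧ p ∈ vars φ) → σ p = p)

/-- Simultaneous substitution of variables by variables. -/
def substV (σ : ℕ → ℕ) : Form → Form
  | .var p => .var (σ p)
  | .neg φ => .neg (substV σ φ)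
  | .conj φ ψ => .conj (substV σ φ) (substV σ ψ)

/-- `ρ_∼(K) ⊢ ψ`. -/
def rhoEntails (K : PB) (ρ : Occurrence → ℕ) (ψ : Form) : Prop :=
  ∀ w : ℕ → Bool, (∀ φ ∈ K, eval w (renameForm ρ φ) = true) → eval w ψ = true

/-- The inference relation `K ⊩₁ φ`. -/
def Inf1 (K : PB) (R : Occurrence → ℕ) (φ : Form) : Prop :=
  ∀ r ρ, IsMCR K R r → IsClassRenaming K r ρ →
    ∃ σ, IsTupleChoice K φ ρ σ ∧ rhoEntails K ρ (substV σ φ)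

/-- The inference relation `K ⊩₂ φ`. -/
def Inf2 (K : PB) (R : Occurrence → ℕ) (φ : Form) : Prop :=
  ∀ r ρ, IsMCR K R r → IsClassRenaming K r ρ →
    ∀ σ, IsTupleChoice K φ ρ σ → rhoEntails K ρ (substV σ φ)

/-- The inference relation `K ⊩₁^B φ`. -/
def Inf1B (K : PB) (R : Occurrence → ℕ) (φ : Form) : Prop :=
  ∀ r ρ, IsBMCR K R r → IsClassRenaming K r ρ →
    ∃ σ, IsTupleChoice K φ ρ σ ∧ rhoEntails K ρ (substV σ φ)

/-- The inference relation `K ⊩₂^B φ`. -/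
def Inf2B (K : PB) (R : Occurrence → ℕ) (φ : Form) : Prop :=
  ∀ r ρ, IsBMCR K R r → IsClassRenaming K r ρ →
    ∀ σ, IsTupleChoice K φ ρ σ → rhoEntails K ρ (substV σ φ)

/-- `μ` is an o-model of `K`: any interpretation `w` with `w (R o) = μ o` for all
occurrences `o` of `K` is a model of `⋀R(K)`. -/
def OModel (K : PB) (R : Occurrence → ℕ) (μ : Occurrence → Bool) : Prop :=
  ∀ w : ℕ → Bool, (∀ o, IsOcc K o → w (R o) = μ o) →
    ∀ φ ∈ K, eval w (renameForm R φ) = true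

/-- `diff_a(μ)`: pairs of occurrences of the same variable on which `μ` differs. -/
def diffA (K : PB) (μ : Occurrence → Bool) : Rel :=
  {q | IsOcc K q.1 ∧ IsOcc K q.2 ∧ sameVar q.1 q.2 ∧ μ q.1 ≠ μ q.2}

/-- `μ` is an a-minimal o-model of `K`. -/
def AMinOModel (K : PB) (R : Occurrence → ℕ) (μ : Occurrence → Bool) : Prop :=
  OModel K R μ ∧ ∀ μ', OModel K R μ' → ¬ diffA K μ' ⊂ diffA K μ

/-- A Boolean interpretation `w` is compatible with an o-interpretation `μ`. -/
def Compatible (K : PB) (μ : Occurrence → Bool) (w : ℕ → Bool) : Prop :=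
  ∀ p ∈ varsPB K, ∃ o, IsOccVar K o p ∧ w p = μ o

/-- The inference relation `K ⊩_{a1} φ`. -/
def InfA1 (K : PB) (R : Occurrence → ℕ) (φ : Form) : Prop :=
  ∀ μ, AMinOModel K R μ → ∃ w, Compatible K μ w ∧ eval w φ = true

/-- The inference relation `K ⊩_{a2} φ`. -/
def InfA2 (K : PB) (R : Occurrence → ℕ) (φ : Form) : Prop :=
  ∀ μ, AMinOModel K R μ → ∀ w, Compatible K μ w → eval w φ = true

/-- LP_m evaluation: an LP_m interpretation assigns a (nonempty) set of truth
values to each variable; it extends to formulas pointwise. -/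
def lpEval (lam : ℕ → Set Bool) : Form → Set Bool
  | .var p => lam p
  | .neg φ => (fun v => !v) '' lpEval lam φ
  | .conj φ ψ => Set.image2 (· && ·) (lpEval lam φ) (lpEval lam ψ)

/-- `lam` is an LP_m interpretation: each variable gets a nonempty set of values. -/
def IsLPInterp (lam : ℕ → Set Bool) : Prop := ∀ p, (lam p).Nonempty

/-- `lam` is an LP_m model of `⋀K`. -/
def LPModelPB (lam : ℕ → Set Bool) (K : PB) : Prop := ∀ φ ∈ K, true ∈ lpEval lam φ

/-- `λ! = {p : λ(p) = {0,1}}`. -/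
def lpBang (lam : ℕ → Set Bool) : Set ℕ := {p | lam p = Set.univ}

/-- `lam` is a minimal LP_m model of `⋀K`. -/
def MinLPModelPB (K : PB) (lam : ℕ → Set Bool) : Prop :=
  IsLPInterp lam ∧ LPModelPB lam K ∧
    ∀ lam', IsLPInterp lam' → LPModelPB lam' K → ¬ lpBang lam' ⊂ lpBang lam

/-- `K ⊢_{LPm} φ`. -/
def LPmEntails (K : PB) (φ : Form) : Prop :=
  ∀ lam, MinLPModelPB K lam → true ∈ lpEval lam φ

/-- Replace the subformula occurrence of `φ` addressed by the path `l` by `ψ`. -/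
def replaceAt : Form → List Step → Form → Form
  | _, [], ψ => ψ
  | .neg φ, .neg :: l, ψ => .neg (replaceAt φ l ψ)
  | .conj φ χ, .left :: l, ψ => .conj (replaceAt φ l ψ) χ
  | .conj φ χ, .right :: l, ψ => .conj φ (replaceAt χ l ψ)
  | φ, _, _ => φ

/-- The equivalence relation `∼_λ` induced on `Occ(K)` by an LP_m interpretation:
its classes are `Occ(p,K)` for `|λ(p)| = 1` and `PosOcc(p,K)`, `NegOcc(p,K)` for
`λ(p) = {0,1}`. -/
def lamRel (K : PB) (lam : ℕ → Set Bool) : Rel :=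
  {q | ∃ p pol pol', IsOccOf K q.1 p pol ∧ IsOccOf K q.2 p pol' ∧
    (lam p = Set.univ → pol = pol')}

open scoped Classical in
/-- The o-interpretation `μ_λ^K` associated with an LP_m interpretation `λ`. -/
noncomputable def muOf (lam : ℕ → Set Bool) (o : Occurrence) : Bool :=
  match occAt o.1 o.2 true with
  | some (p, pol) =>
      if lam p = ({false} : Set Bool) then false
      else if lam p = ({true} : Set Bool) then true
      else pol
  | none => false

end Occ

/-! Let `μ` be an a-minimal o-model of `K` and let `∼` relate two occurrences of the same
variable on which `μ` agrees. Any compliant, consistent enlargement of `∼` comes with a model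
of `R(K)` whose o-model disagrees on strictly fewer pairs, so a-minimality makes `∼` an MCR.
Applying `K ⊩₁ φ` to `∼` and a `∼`-renaming `ρ` gives a tuple `σ` with `ρ(K) ⊢ φσ`. Since
`μ` is constant on `∼`-classes it descends to a model `w` of `ρ(K)`, so `w ∘ σ` satisfies `φ`,
and `w ∘ σ` reads every shared variable `p` as `μ` at some occurrence of `p`. -/

namespace Occ

section Formulas

lemma mem_vars_of_occAt :
    ∀ {ψ : Form} {l : List Step} {pol : Bool} {p : ℕ} {pol' : Bool},
      occAt ψ l pol = some (p, pol') → p ∈ vars ψ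
  | .var _, [], _, _, _, h => by simp_all [occAt, vars]
  | .neg ψ, .neg :: _, _, _, _, h => (mem_vars_of_occAt h : _ ∈ vars ψ)
  | .conj _ _, .left :: _, _, _, _, h => Finset.mem_union_left _ (mem_vars_of_occAt h)
  | .conj _ _, .right :: _, _, _, _, h => Finset.mem_union_right _ (mem_vars_of_occAt h)

lemma exists_occAt_of_mem_vars :
    ∀ {ψ : Form} {p : ℕ}, p ∈ vars ψ → ∀ pol, ∃ l pol', occAt ψ l pol = some (p, pol')
  | .var _, _, hp, pol => ⟨[], pol, by simp_all [occAt, vars]⟩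
  | .neg ψ, _, hp, pol =>
    let ⟨l, pol', hl⟩ := exists_occAt_of_mem_vars (ψ := ψ) hp (!pol); ⟨.neg :: l, pol', hl⟩
  | .conj _ _, _, hp, pol => by
    rcases Finset.mem_union.1 hp with hp | hp
    · obtain ⟨l, pol', hl⟩ := exists_occAt_of_mem_vars hp pol
      exact ⟨.left :: l, pol', hl⟩
    · obtain ⟨l, pol', hl⟩ := exists_occAt_of_mem_vars hp pol
      exact ⟨.right :: l, pol', hl⟩

lemma eval_congr {w w' : ℕ → Bool} :
    ∀ {ψ : Form}, (∀ p ∈ vars ψ, w p = w' p) → eval w ψ = eval w' ψ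
  | .var p, h => h p (Finset.mem_singleton_self p)
  | .neg _, h => congrArg (!·) (eval_congr h)
  | .conj _ _, h => by
    simp only [eval, vars, Finset.mem_union] at h ⊢
    rw [eval_congr fun p hp => h p (.inl hp), eval_congr fun p hp => h p (.inr hp)]

lemma eval_substV (σ : ℕ → ℕ) (w : ℕ → Bool) :
    ∀ ψ, eval w (substV σ ψ) = eval (w ∘ σ) ψ
  | .var _ => rfl
  | .neg ψ => by simp only [substV, eval, eval_substV σ w ψ]
  | .conj ψ χ => by simp only [substV, eval, eval_substV σ w ψ, eval_substV σ w χ]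

lemma eval_renameBy_congr {w w' : ℕ → Bool} :
    ∀ {ψ : Form} {pol : Bool} {f g : List Step → ℕ},
      (∀ l p pol', occAt ψ l pol = some (p, pol') → w (f l) = w' (g l)) →
      eval w (renameBy f ψ) = eval w' (renameBy g ψ)
  | .var q, pol, _, _, h => h [] q pol rfl
  | .neg _, _, _, _, h => congrArg (!·) (eval_renameBy_congr fun l => h (.neg :: l))
  | .conj _ _, _, _, _, h => by
    simp only [renameBy, eval]
    rw [eval_renameBy_congr fun l => h (.left :: l), eval_renameBy_congr fun l => h (.right :: l)]

lemma eval_renameForm_congr {K : PB} {ψ : Form} (hψ : ψ ∈ K) {f g : Occurrence → ℕ}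
    {w w' : ℕ → Bool} (h : ∀ o, IsOcc K o → w (f o) = w' (g o)) :
    eval w (renameForm f ψ) = eval w' (renameForm g ψ) :=
  eval_renameBy_congr fun l p pol' hl => h (ψ, l) ⟨hψ, p, pol', hl⟩

end Formulas

def formCode : Form → ℕ
  | .var p => Nat.pair 0 p
  | .neg ψ => Nat.pair 1 (formCode ψ)
  | .conj ψ χ => Nat.pair 2 (Nat.pair (formCode ψ) (formCode χ))

lemma formCode_injective : Function.Injective formCode := by
  intro φ χ h
  induction φ generalizing χ with
  | var p => cases χ <;> simp_all [formCode, Nat.pair_eq_pair]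
  | neg ψ ih =>
    cases χ <;> simp [formCode, Nat.pair_eq_pair] at h ⊢
    exact ih h
  | conj ψ₁ ψ₂ ih₁ ih₂ =>
    cases χ <;> simp [formCode, Nat.pair_eq_pair] at h ⊢
    exact ⟨ih₁ h.1, ih₂ h.2⟩

instance : Nonempty Form := ⟨.var 0⟩

instance : Countable Form := formCode_injective.countable

def stepCode : Step → ℕ
  | .neg => 0
  | .left => 1
  | .right => 2

instance : Countable Step :=
  Function.Injective.countable (f := stepCode) fun a b => by cases a <;> cases b <;> simp [stepCode]

def varOf (o : Occurrence) : ℕ := ((occAt o.1 o.2 true).map Prod.fst).getD 0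

section Occurrences

variable {K : PB} {o o' : Occurrence} {p : ℕ}

lemma IsOccVar.varOf_eq (h : IsOccVar K o p) : varOf o = p := by
  obtain ⟨_, _, h⟩ := h
  simp [varOf, h]

lemma IsOccVar.isOcc (h : IsOccVar K o p) : IsOcc K o :=
  let ⟨pol, hK, h⟩ := h; ⟨hK, p, pol, h⟩

lemma IsOcc.isOccVar_varOf (h : IsOcc K o) : IsOccVar K o (varOf o) := by
  obtain ⟨hK, p, pol, h⟩ := h
  exact ⟨pol, hK, by simp [varOf, h]⟩

lemma IsOcc.varOf_mem_varsPB (h : IsOcc K o) : varOf o ∈ varsPB K := by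
  obtain ⟨pol, hK, h⟩ := h.isOccVar_varOf
  exact Finset.mem_sup.2 ⟨o.1, hK, mem_vars_of_occAt h⟩

lemma sameVar_iff_varOf_eq (ho : IsOcc K o) (ho' : IsOcc K o') :
    sameVar o o' ↔ varOf o = varOf o' := by
  obtain ⟨pol, -, h⟩ := ho.isOccVar_varOf
  obtain ⟨pol', -, h'⟩ := ho'.isOccVar_varOf
  constructor
  · rintro ⟨q, a, b, ha, hb⟩
    simp only [h, h', Option.some_inj, Prod.mk.injEq] at ha hb
    rw [ha.1, hb.1]
  · intro hv
    exact ⟨varOf o, pol, pol', h, hv ▸ h'⟩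

lemma exists_isOccVar_of_mem_varsPB (h : p ∈ varsPB K) : ∃ o, IsOccVar K o p := by
  obtain ⟨ψ, hψ, hp⟩ := Finset.mem_sup.1 h
  obtain ⟨l, pol, hl⟩ := exists_occAt_of_mem_vars hp true
  exact ⟨(ψ, l), pol, hψ, hl⟩

end Occurrences

lemma exists_comp_eq_on {α β γ : Type*} [Nonempty γ] {s : Set α} {f : α → β} {g : α → γ}
    (h : ∀ a ∈ s, ∀ b ∈ s, f a = f b → g a = g b) : ∃ w : β → γ, ∀ a ∈ s, w (f a) = g a := by
  have hfac : Function.FactorsThrough (s.domRestrict g) (s.domRestrict f) :=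
    fun a b hab => h a a.2 b b.2 hab
  exact ⟨Function.extend (s.domRestrict f) (s.domRestrict g) fun _ => Classical.arbitrary γ,
    fun a ha => hfac.extend_apply _ ⟨a, ha⟩⟩

section OModels

variable {K : PB} {R : Occurrence → ℕ} {μ : Occurrence → Bool}

lemma IsCRenaming.exists_realize (hR : IsCRenaming K R) (μ : Occurrence → Bool) :
    ∃ w : ℕ → Bool, ∀ o, IsOcc K o → w (R o) = μ o :=
  exists_comp_eq_on fun a ha b hb hab => congrArg μ (hR.inj a b ha hb hab)

lemma OModel.eval_renameForm (hR : IsCRenaming K R) (hμ : OModel K R μ)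
    {f : Occurrence → ℕ} {w : ℕ → Bool} (hw : ∀ o, IsOcc K o → w (f o) = μ o) :
    ∀ ψ ∈ K, eval w (renameForm f ψ) = true := by
  obtain ⟨w', hw'⟩ := hR.exists_realize μ
  intro ψ hψ
  rw [eval_renameForm_congr hψ fun o ho => (hw o ho).trans (hw' o ho).symm]
  exact hμ w' hw' ψ hψ

lemma oModel_comp {w : ℕ → Bool} (hw : ∀ ψ ∈ K, eval w (renameForm R ψ) = true) :
    OModel K R (w ∘ R) := fun w' hw' ψ hψ => by
  rw [eval_renameForm_congr hψ hw']
  exact hw ψ hψ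

def agreeRel (K : PB) (μ : Occurrence → Bool) : Rel :=
  {q | q ∈ sameVarRel K ∧ μ q.1 = μ q.2}

lemma isEquivOn_agreeRel (K : PB) (μ : Occurrence → Bool) : IsEquivOn K (agreeRel K μ) where
  dom _ hq := ⟨hq.1.1, hq.1.2.1⟩
  refl o ho := ⟨⟨ho, ho, (sameVar_iff_varOf_eq ho ho).2 rfl⟩, rfl⟩
  symm := by
    rintro q ⟨⟨h₁, h₂, hv⟩, hμ⟩
    exact ⟨⟨h₂, h₁, (sameVar_iff_varOf_eq h₂ h₁).2 ((sameVar_iff_varOf_eq h₁ h₂).1 hv).symm⟩,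
      hμ.symm⟩
  trans := by
    rintro a b c ⟨⟨ha, hb, hab⟩, hμab⟩ ⟨⟨-, hc, hbc⟩, hμbc⟩
    refine ⟨⟨ha, hc, (sameVar_iff_varOf_eq ha hc).2 ?_⟩, hμab.trans hμbc⟩
    exact ((sameVar_iff_varOf_eq ha hb).1 hab).trans ((sameVar_iff_varOf_eq hb hc).1 hbc)

lemma compliant_agreeRel (K : PB) (μ : Occurrence → Bool) : Compliant (agreeRel K μ) :=
  fun _ hq => hq.1.2.2

lemma AMinOModel.isMCR_agreeRel (hR : IsCRenaming K R) (hμ : AMinOModel K R μ) :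
    IsMCR K R (agreeRel K μ) := by
  refine ⟨isEquivOn_agreeRel K μ, compliant_agreeRel K μ, ?_, ?_⟩
  · obtain ⟨w, hw⟩ := hR.exists_realize μ
    exact ⟨w, hμ.1 w hw, fun q hq => by rw [hw _ hq.1.1, hw _ hq.1.2.1, hq.2]⟩
  rintro r' hr' hc' ⟨w, hwK, hwr'⟩ ⟨hsub, hnsub⟩
  refine hμ.2 (w ∘ R) (oModel_comp hwK) ⟨?_, fun hdiff => hnsub fun q hq => ?_⟩
  · rintro q ⟨h₁, h₂, hv, hne⟩
    exact ⟨h₁, h₂, hv, fun hμq => hne (hwr' q (hsub ⟨⟨h₁, h₂, hv⟩, hμq⟩))⟩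
  · have hq' : q ∈ sameVarRel K := ⟨(hr'.dom q hq).1, (hr'.dom q hq).2, hc' q hq⟩
    by_contra hnot
    exact (hdiff ⟨hq'.1, hq'.2.1, hq'.2.2, fun hμq => hnot ⟨hq', hμq⟩⟩).2.2.2 (hwr' q hq)

end OModels

section ClassRenaming

variable {K : PB} {r : Rel} {o o' : Occurrence}

def IsFullOcc (K : PB) (r : Rel) (o : Occurrence) : Prop :=
  ∀ o', IsOccVar K o' (varOf o) → (o, o') ∈ r

open Classical in
-- A full class keeps its variable; any other class is labelled by the code of a chosen
-- representative, shifted above every variable of `K`.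
noncomputable def classRenaming (K : PB) (r : Rel) (e : Occurrence → ℕ) (o : Occurrence) : ℕ :=
  if IsFullOcc K r o then varOf o
  else (varsPB K).sup id + 1 + e (Classical.epsilon fun o' => (o, o') ∈ r)

lemma IsEquivOn.mem_epsilon (hr : IsEquivOn K r) (ho : IsOcc K o) :
    (o, Classical.epsilon fun o' => (o, o') ∈ r) ∈ r :=
  Classical.epsilon_spec (p := fun o' => (o, o') ∈ r) ⟨o, hr.refl o ho⟩

lemma IsEquivOn.epsilon_congr (hr : IsEquivOn K r) (h : (o, o') ∈ r) :
    (Classical.epsilon fun x => (o, x) ∈ r) = Classical.epsilon fun x => (o', x) ∈ r :=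
  congrArg _ <| funext fun _ =>
    propext ⟨hr.trans _ _ _ (hr.symm _ h), hr.trans _ _ _ h⟩

lemma varOf_eq_of_mem (hr : IsEquivOn K r) (hc : Compliant r) (h : (o, o') ∈ r) :
    varOf o = varOf o' :=
  (sameVar_iff_varOf_eq (hr.dom _ h).1 (hr.dom _ h).2).1 (hc _ h)

lemma isFullOcc_congr (hr : IsEquivOn K r) (hc : Compliant r) (h : (o, o') ∈ r) :
    IsFullOcc K r o ↔ IsFullOcc K r o' := by
  rw [IsFullOcc, IsFullOcc, varOf_eq_of_mem hr hc h]
  exact ⟨fun hf x hx => hr.trans _ _ _ (hr.symm _ h) (hf x hx),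
    fun hf x hx => hr.trans _ _ _ h (hf x hx)⟩

lemma isClassRenaming_classRenaming (hr : IsEquivOn K r) (hc : Compliant r)
    {e : Occurrence → ℕ} (he : Function.Injective e) :
    IsClassRenaming K r (classRenaming K r e) := by
  refine ⟨fun o o' ho ho' => ⟨fun heq => ?_, fun h => ?_⟩, fun o p hop hall => ?_⟩
  · have hlt : ∀ {x}, IsOcc K x → varOf x < (varsPB K).sup id + 1 :=
      fun hx => Nat.lt_succ_of_le (Finset.le_sup (f := id) hx.varOf_mem_varsPB)
    unfold classRenaming at heq
    split_ifs at heq with hf hf'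
    · exact hf o' (heq ▸ ho'.isOccVar_varOf)
    · have := hlt ho; omega
    · have := hlt ho'; omega
    · have hrep := he (Nat.add_left_cancel heq)
      exact hr.trans _ _ _ (hr.mem_epsilon ho) (hrep ▸ hr.symm _ (hr.mem_epsilon ho'))
  · rw [classRenaming, classRenaming, varOf_eq_of_mem hr hc h, hr.epsilon_congr h]
    classical exact if_congr (isFullOcc_congr hr hc h) rfl rfl
  · have hv := hop.varOf_eq
    have hfull : IsFullOcc K r o := fun o' ho' => hall o' (hv ▸ ho')
    rw [classRenaming, if_pos hfull, hv]

lemma exists_isClassRenaming (hr : IsEquivOn K r) (hc : Compliant r) :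
    ∃ ρ, IsClassRenaming K r ρ :=
  let ⟨_, he⟩ := Countable.exists_injective_nat Occurrence
  ⟨_, isClassRenaming_classRenaming hr hc he⟩

end ClassRenaming

-- Off `vars φ` the substitution plays no role, so there the witness may read `μ` at any
-- occurrence.
lemma exists_compatible_of_isTupleChoice {K : PB} {φ : Form} {ρ : Occurrence → ℕ} {σ : ℕ → ℕ}
    {μ : Occurrence → Bool} {w : ℕ → Bool} (hσ : IsTupleChoice K φ ρ σ)
    (hw : ∀ o, IsOcc K o → w (ρ o) = μ o) (hφ : eval (w ∘ σ) φ = true) :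
    ∃ w', Compatible K μ w' ∧ eval w' φ = true := by
  classical
  let w' p :=
    if p ∈ vars φ then w (σ p) else if h : ∃ o, IsOccVar K o p then μ h.choose else false
  refine ⟨w', fun p hp => ?_, hφ ▸ eval_congr fun p hp => if_pos hp⟩
  by_cases hpφ : p ∈ vars φ
  · obtain ⟨o, ho, hσo⟩ := hσ.1 p hp hpφ
    exact ⟨o, ho, by simp only [w', if_pos hpφ, hσo, hw o ho.isOcc]⟩
  · have h := exists_isOccVar_of_mem_varsPB hp
    exact ⟨h.choose, h.choose_spec, by simp only [w', if_neg hpφ, dif_pos h]⟩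

end Occ

/-- Proposition 14: `K ⊩₁ φ` implies `K ⊩_{a1} φ`. -/
theorem inf1_implies_infA1 (K : Occ.PB)
    (R : Occ.Occurrence → ℕ) (hR : Occ.IsCRenaming K R)
    (φ : Occ.Form) (h : Occ.Inf1 K R φ) :
    Occ.InfA1 K R φ := by
  intro μ hμ
  obtain ⟨ρ, hρ⟩ :=
    Occ.exists_isClassRenaming (Occ.isEquivOn_agreeRel K μ) (Occ.compliant_agreeRel K μ)
  obtain ⟨σ, hσ, hent⟩ := h _ ρ (hμ.isMCR_agreeRel hR) hρ
  obtain ⟨w, hw⟩ : ∃ w : ℕ → Bool, ∀ o, Occ.IsOcc K o → w (ρ o) = μ o :=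
    Occ.exists_comp_eq_on fun a ha b hb hab => ((hρ.1 a b ha hb).1 hab).2
  have hφ := Occ.eval_substV σ w φ ▸ hent w (hμ.1.eval_renameForm hR hw)
  exact Occ.exists_compatible_of_isTupleChoice hσ hw hφ
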